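/- Let X be a Banach space and suppose R, K : X → X are bounded operators and d : D(d) ⊆ X → X a closed operator such that dRu + Rdu = u - Ku for all u ∈ D(d), dK = 0, and K = 0 on closure(Range(d)). Then P := d∘R (defined on all of X, assuming R maps X into D(d)) is a bounded projection of X onto Range-closure(d): P² = P, and Pu = u for u ∈ Range(d). -/
import Mathlib


open Set

/-- Abstract potential-operator projection: let `d` be a (closed) linear operator with
domain `D ⊆ X` and `d² = 0`, and let `R, K : X → X` be bounded with `R` mapping into
`D`, `K` mapping into `D` with `d ∘ K = 0`, `K = 0` on `closure(Range d)`, and the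
homotopy identity `d(Ru) + R(du) = u - Ku` on `D`. Then `P := d ∘ R` satisfies
`P² = P` and `Pu = u` for every `u ∈ Range(d)`. -/
theorem stmt13 {X : Type*} [NormedAddCommGroup X] [NormedSpace ℝ X]
    (D : Submodule ℝ X) (d : D →ₗ[ℝ] X) (R K : X →L[ℝ] X)
    (hclosed : IsClosed {p : X × X | ∃ hp : p.1 ∈ D, d ⟨p.1, hp⟩ = p.2})
    (hRD : ∀ x : X, R x ∈ D)
    (hKD : ∀ x : X, K x ∈ D)
    (hrange : ∀ x : D, (d x : X) ∈ D)
    (hd2 : ∀ x : D, d ⟨d x, hrange x⟩ = 0)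
    (hdK : ∀ x : X, d ⟨K x, hKD x⟩ = 0)
    (hK0 : ∀ u ∈ closure (range fun x : D => d x), K u = 0)
    (hhom : ∀ x : D, d ⟨R (x : X), hRD x⟩ + R (d x) = (x : X) - K x) :
    (∀ x : X, d ⟨R (d ⟨R x, hRD x⟩), hRD _⟩ = d ⟨R x, hRD x⟩) ∧
    (∀ u ∈ range fun x : D => d x, d ⟨R u, hRD u⟩ = u) := by
  have key : ∀ x : D, d ⟨R (d x), hRD _⟩ = d x := by
    intro x
    have hR : R (d x) = ((x : X) - K x) - d ⟨R (x : X), hRD x⟩ :=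
      eq_sub_of_add_eq' (hhom x)
    have e : (⟨R (d x), hRD _⟩ : D)
        = x - ⟨K (x : X), hKD x⟩ - ⟨d ⟨R (x : X), hRD x⟩, hrange ⟨R (x : X), hRD x⟩⟩ :=
      Subtype.ext (by simpa using hR)
    rw [e, map_sub, map_sub, hdK, hd2]
    simp
  exact ⟨fun x => key ⟨R x, hRD x⟩, by rintro u ⟨x, rfl⟩; exact key x⟩
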